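/- arXiv:1411.6784 — 5 statements merged into one kernel-verified Lean document; each statement's English description precedes it below -/
import Mathlib

section
/- Let C ⊆ Q^n be an (n,M,q) code (n arbitrary) and t = 2. Then C is a 2-MIPPC if and only if C is a 2̄-separable code; that is, the identifiable parent property for coalitions of size at most 2 (every nonempty family of sub-codes of size ≤ 2 with the same descendant code has nonempty intersection) holds if and only if for any distinct sub-codes C₁, C₂ ⊆ C with |C₁| ≤ 2 and |C₂| ≤ 2, desc(C₁) ≠ desc(C₂). -/
/-- The descendant code `desc(C') = C'(1) × ⋯ × C'(n)` of a sub-code `C'`. -/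
def descC {n q : ℕ} (C' : Finset (Fin n → Fin q)) : Set (Fin n → Fin q) :=
  {x | ∀ i, ∃ c ∈ C', c i = x i}

/-- `C` is a `t`-MIPPC(n,·,q): every nonempty family of nonempty sub-codes of size at most `t`
with the same descendant code has a common codeword. -/
def isMIPPC {n q : ℕ} (t : ℕ) (C : Finset (Fin n → Fin q)) : Prop :=
  ∀ S : Set (Fin n → Fin q),
    (∃ C' : Finset (Fin n → Fin q), C' ⊆ C ∧ C'.Nonempty ∧ C'.card ≤ t ∧ descC C' = S) →
    ∃ c, ∀ C' : Finset (Fin n → Fin q),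
      C' ⊆ C → C'.Nonempty → C'.card ≤ t → descC C' = S → c ∈ C'

/-- `C` is a `t̄`-separable code: distinct nonempty sub-codes of size at most `t`
have distinct descendant codes. -/
def isSC {n q : ℕ} (t : ℕ) (C : Finset (Fin n → Fin q)) : Prop :=
  ∀ C₁ C₂ : Finset (Fin n → Fin q),
    C₁ ⊆ C → C₂ ⊆ C → C₁.Nonempty → C₂.Nonempty → C₁.card ≤ t → C₂.card ≤ t →
    descC C₁ = descC C₂ → C₁ = C₂

lemma mem_descC_self {n q : ℕ} {C' : Finset (Fin n → Fin q)} {c : Fin n → Fin q}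
    (hc : c ∈ C') : c ∈ descC C' := fun _ => ⟨c, hc, rfl⟩

lemma coord_lemma {n q : ℕ} {C₁ C₂ : Finset (Fin n → Fin q)} {c d : Fin n → Fin q}
    (h : descC C₁ = descC C₂) (hc : c ∈ C₁) (hd : d ∈ C₁) (i : Fin n) :
    ∃ e ∈ C₂, e i = d i := by
  have hx : (fun j => if j = i then d j else c j) ∈ descC C₁ := by
    intro j
    by_cases hj : j = i
    · exact ⟨d, hd, by simp [hj]⟩
    · exact ⟨c, hc, by simp [hj]⟩
  rw [h] at hx
  obtain ⟨e, he, hei⟩ := hx i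
  exact ⟨e, he, by simpa using hei⟩

lemma card_le_two_struct {α : Type*} [DecidableEq α] {C' : Finset α} {c : α}
    (hc : c ∈ C') (h2 : C'.card ≤ 2) : C' = {c} ∨ ∃ a, a ≠ c ∧ C' = {c, a} := by
  by_cases h : ∃ a ∈ C', a ≠ c
  · obtain ⟨a, ha, hane⟩ := h
    right
    refine ⟨a, hane, ?_⟩
    have hsub : ({c, a} : Finset α) ⊆ C' := by
      intro x hx
      simp at hx
      rcases hx with rfl | rfl <;> assumption
    have hcard : C'.card ≤ ({c, a} : Finset α).card := by
      rw [Finset.card_insert_of_notMem (by simpa using fun h => hane h.symm),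
        Finset.card_singleton]
      exact h2
    exact (Finset.eq_of_subset_of_card_le hsub hcard).symm
  · left
    push_neg at h
    apply Finset.eq_singleton_iff_unique_mem.mpr
    exact ⟨hc, fun x hx => h x hx⟩

/-- A code is a 2-MIPPC iff it is a 2̄-separable code. -/
theorem mippc_two_iff_sc_two {n q : ℕ} (C : Finset (Fin n → Fin q)) :
    isMIPPC 2 C ↔ isSC 2 C := by
  constructor
  · intro hM C₁ C₂ h1C h2C h1ne h2ne h1card h2card hdesc
    obtain ⟨c, hc⟩ := hM (descC C₁) ⟨C₁, h1C, h1ne, h1card, rfl⟩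
    have hc1 := hc C₁ h1C h1ne h1card rfl
    have hc2 := hc C₂ h2C h2ne h2card hdesc.symm
    rcases card_le_two_struct hc1 h1card with h1 | ⟨a, ha, h1⟩
    · rcases card_le_two_struct hc2 h2card with h2 | ⟨b, hb, h2⟩
      · rw [h1, h2]
      · exfalso
        have hbmem : b ∈ descC C₁ := hdesc ▸ mem_descC_self (by simp [h2])
        apply hb
        funext i
        obtain ⟨e, he, hei⟩ := hbmem i
        rw [h1] at he; simp at he; rw [← hei, he]
    · rcases card_le_two_struct hc2 h2card with h2 | ⟨b, hb, h2⟩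
      · exfalso
        have hamem : a ∈ descC C₂ := hdesc ▸ mem_descC_self (by simp [h1])
        apply ha
        funext i
        obtain ⟨e, he, hei⟩ := hamem i
        rw [h2] at he; simp at he; rw [← hei, he]
      · have hab : a = b := by
          funext i
          by_contra hne
          obtain ⟨e, he, hei⟩ := coord_lemma hdesc hc1 (show a ∈ C₁ by simp [h1]) i
          obtain ⟨f, hf, hfi⟩ := coord_lemma hdesc.symm hc2 (show b ∈ C₂ by simp [h2]) i
          rw [h2] at he; rw [h1] at hf
          simp at he hf
          rcases he with rfl | rfl
          · rcases hf with rfl | rfl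
            · exact hne (hei.symm.trans hfi)
            · exact hne hfi
          · exact hne hei.symm
        rw [h1, h2, hab]
  · rintro hS S ⟨C', hCC, hne, hcard, hdesc⟩
    obtain ⟨c, hc⟩ := hne
    exact ⟨c, fun C'' h hne' hcard' hdesc' => by
      rw [hS C'' C' h hCC hne' ⟨c, hc⟩ hcard' hcard (hdesc'.trans hdesc.symm)]
      exact hc⟩
end

section
/- If there exists a t-MIPPC(n, M, q) (a q-ary multimedia t-IPP code of length n with M codewords), then there exists a t-MIPPC(nq, M, 2) (a binary multimedia t-IPP code of length nq with M codewords). -/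
/-! The descendant code of `D` is the product of the coordinate sets `D(i)`, and each `D(i)` is
recovered from `desc(D)` because `D ⊆ desc(D)`. Under the one-hot encoding, `a ∈ C'(i)` exactly
when the binary coordinate `(i, a)` of the encoded sub-code takes the value `1`, so equal binary
descendant codes force equal `q`-ary ones; hence the MIPPC property passes to the image. -/

section Descendant

variable {n q : ℕ}

lemma mem_descC_of_mem {D : Finset (Fin n → Fin q)} {c : Fin n → Fin q} (hc : c ∈ D) :
    c ∈ descC D :=
  fun _ => ⟨c, hc, rfl⟩

lemma exists_mem_descC_apply_eq_iff (D : Finset (Fin n → Fin q)) (i : Fin n) (a : Fin q) :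
    (∃ x ∈ descC D, x i = a) ↔ ∃ c ∈ D, c i = a := by
  constructor
  · rintro ⟨x, hx, rfl⟩
    exact hx i
  · rintro ⟨c, hc, rfl⟩
    exact ⟨c, mem_descC_of_mem hc, rfl⟩

lemma descC_eq_descC_iff {A B : Finset (Fin n → Fin q)} :
    descC A = descC B ↔ ∀ i a, (∃ c ∈ A, c i = a) ↔ ∃ c ∈ B, c i = a := by
  constructor
  · intro h i a
    rw [← exists_mem_descC_apply_eq_iff, ← exists_mem_descC_apply_eq_iff, h]
  · intro h
    ext x
    exact forall_congr' fun i => h i (x i)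

end Descendant

section Image

variable {n q m r : ℕ}

lemma isMIPPC_image {t : ℕ} {C : Finset (Fin n → Fin q)} (hC : isMIPPC t C)
    {f : (Fin n → Fin q) → Fin m → Fin r} (hf : Function.Injective f)
    (hdesc : ∀ A B : Finset (Fin n → Fin q),
      descC (A.image f) = descC (B.image f) → descC A = descC B) :
    isMIPPC t (C.image f) := by
  rintro S ⟨D, hDC, hD, hDt, rfl⟩
  obtain ⟨A, hAC, rfl⟩ := Finset.subset_image_iff.mp hDC
  rw [Finset.card_image_of_injective A hf] at hDt
  obtain ⟨c, hc⟩ := hC (descC A) ⟨A, hAC, Finset.image_nonempty.mp hD, hDt, rfl⟩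
  refine ⟨f c, fun D' hD'C hD' hD't hD'A => ?_⟩
  obtain ⟨B, hBC, rfl⟩ := Finset.subset_image_iff.mp hD'C
  rw [Finset.card_image_of_injective B hf] at hD't
  exact Finset.mem_image_of_mem f
    (hc B hBC (Finset.image_nonempty.mp hD') hD't (hdesc B A hD'A))

end Image

section OneHot

variable {n q : ℕ}

/-- Coordinate `(i, a)` of the binary word sits at position `finProdFinEquiv (i, a)`. -/
def oneHot (c : Fin n → Fin q) : Fin (n * q) → Fin 2 :=
  fun j => if c (finProdFinEquiv.symm j).1 = (finProdFinEquiv.symm j).2 then 1 else 0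

lemma oneHot_apply_eq_one_iff (c : Fin n → Fin q) (i : Fin n) (a : Fin q) :
    oneHot c (finProdFinEquiv (i, a)) = 1 ↔ c i = a := by
  simp [oneHot]

lemma oneHot_injective : Function.Injective (oneHot (n := n) (q := q)) := by
  intro c c' h
  funext i
  have hc : oneHot c (finProdFinEquiv (i, c i)) = 1 := (oneHot_apply_eq_one_iff c i _).mpr rfl
  exact ((oneHot_apply_eq_one_iff c' i _).mp (h ▸ hc)).symm

lemma exists_mem_image_oneHot_iff (A : Finset (Fin n → Fin q)) (i : Fin n) (a : Fin q) :
    (∃ d ∈ A.image oneHot, d (finProdFinEquiv (i, a)) = 1) ↔ ∃ c ∈ A, c i = a := by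
  simp only [Finset.exists_mem_image, oneHot_apply_eq_one_iff]

lemma descC_eq_of_descC_image_oneHot_eq {A B : Finset (Fin n → Fin q)}
    (h : descC (A.image oneHot) = descC (B.image oneHot)) : descC A = descC B := by
  rw [descC_eq_descC_iff] at h ⊢
  intro i a
  rw [← exists_mem_image_oneHot_iff A, ← exists_mem_image_oneHot_iff B]
  exact h _ 1

end OneHot

/-- From a `t`-MIPPC(n,M,q) one obtains a binary `t`-MIPPC(nq,M,2). -/
theorem mippc_binary_of_mippc {t n M q : ℕ} (C : Finset (Fin n → Fin q))
    (hM : C.card = M) (hC : isMIPPC t C) :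
    ∃ D : Finset (Fin (n * q) → Fin 2), D.card = M ∧ isMIPPC t D :=
  ⟨C.image oneHot, by rw [Finset.card_image_of_injective C oneHot_injective, hM],
    isMIPPC_image hC oneHot_injective fun _ _ => descC_eq_of_descC_image_oneHot_eq⟩
end

section
/- Let C be a (2,M,q) code over Q. Then C is a 2̄-separable code (any two distinct sub-codes of size at most 2 have distinct descendant codes) if and only if for all distinct a₁, a₂ ∈ Q, |A¹_{a₁} ∩ A¹_{a₂}| ≤ 1, where A¹_a = {b ∈ Q : (a,b) ∈ C}. -/
/-!
Both conditions say that `C` contains no rectangle `{a, a'} × {b, b'}` with `a ≠ a'` and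
`b ≠ b'`. The two diagonals of such a rectangle are distinct pairs of codewords with the same
descendant code, so separability excludes rectangles. Conversely, if `desc C₁ = desc C₂` and some
`(a, b) ∈ C₁` is missing from `C₂`, then `C₂` contains words `(a, b')` and `(a', b)` with
`a' ≠ a`, `b' ≠ b`; these are descendants of `C₁`, and as `|C₁| ≤ 2` the only way for `C₁` to
produce them is a second codeword `(a', b')`, which closes a rectangle.
-/

/-- The descendant code of a sub-code of a code of length 2, viewed as a set of pairs. -/
def desc2 {q : ℕ} (C' : Finset (Fin q × Fin q)) : Set (Fin q × Fin q) :=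
  {x | (∃ c ∈ C', c.1 = x.1) ∧ (∃ c ∈ C', c.2 = x.2)}

/-- `C` is a `t`-MIPPC of length 2: for every descendant set produced by some nonempty
sub-code of size at most `t`, all such parent sets have a common codeword. -/
def isMIPPC2 {q : ℕ} (t : ℕ) (C : Finset (Fin q × Fin q)) : Prop :=
  ∀ S : Set (Fin q × Fin q),
    (∃ C' : Finset (Fin q × Fin q), C' ⊆ C ∧ C'.Nonempty ∧ C'.card ≤ t ∧ desc2 C' = S) →
    ∃ c, ∀ C' : Finset (Fin q × Fin q),
      C' ⊆ C → C'.Nonempty → C'.card ≤ t → desc2 C' = S → c ∈ C'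

/-- `A¹_a = {b : (a,b) ∈ C}`. -/
def A1 {q : ℕ} (C : Finset (Fin q × Fin q)) (a : Fin q) : Finset (Fin q) :=
  (C.filter (fun c => c.1 = a)).image Prod.snd

/-- Condition (I). -/
def CondI {q : ℕ} (C : Finset (Fin q × Fin q)) : Prop :=
  ∀ a₁ a₂ : Fin q, a₁ ≠ a₂ → (A1 C a₁ ∩ A1 C a₂).card ≤ 1

/-- Condition (II). -/
def CondII {q : ℕ} (C : Finset (Fin q × Fin q)) : Prop :=
  ¬ ∃ a₁ a₂ a₃ b₁ b₂ b₃ : Fin q,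
      a₁ ≠ a₂ ∧ a₁ ≠ a₃ ∧ a₂ ≠ a₃ ∧ b₁ ≠ b₂ ∧ b₁ ≠ b₃ ∧ b₂ ≠ b₃ ∧
      b₁ ∈ A1 C a₁ ∧ b₂ ∈ A1 C a₁ ∧ b₂ ∈ A1 C a₂ ∧ b₃ ∈ A1 C a₂ ∧
      b₁ ∈ A1 C a₃ ∧ b₃ ∈ A1 C a₃

/-- `C` is a `2̄`-separable code of length 2. -/
def isSC2 {q : ℕ} (C : Finset (Fin q × Fin q)) : Prop :=
  ∀ C₁ C₂ : Finset (Fin q × Fin q),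
    C₁ ⊆ C → C₂ ⊆ C → C₁.Nonempty → C₂.Nonempty → C₁.card ≤ 2 → C₂.card ≤ 2 →
    desc2 C₁ = desc2 C₂ → C₁ = C₂

def IsRectangleFree {α β : Type*} (C : Finset (α × β)) : Prop :=
  ∀ ⦃a a' : α⦄ ⦃b b' : β⦄, (a, b) ∈ C → (a, b') ∈ C → (a', b) ∈ C → (a', b') ∈ C →
    a = a' ∨ b = b'

section

variable {q : ℕ}

lemma mem_A1 {C : Finset (Fin q × Fin q)} {a b : Fin q} : b ∈ A1 C a ↔ (a, b) ∈ C := by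
  simp [A1]

lemma condI_iff_isRectangleFree {C : Finset (Fin q × Fin q)} :
    CondI C ↔ IsRectangleFree C := by
  simp only [CondI, IsRectangleFree, Finset.card_le_one, Finset.mem_inter, mem_A1]
  constructor
  · intro h a a' b b' hab hab' ha'b ha'b'
    exact or_iff_not_imp_left.2 fun hne => h a a' hne b ⟨hab, ha'b⟩ b' ⟨hab', ha'b'⟩
  · intro h a a' hne b hb b' hb'
    exact (h hb.1 hb'.1 hb.2 hb'.2).resolve_left hne

lemma mem_desc2_of_mem {C' : Finset (Fin q × Fin q)} {x : Fin q × Fin q} (hx : x ∈ C') :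
    x ∈ desc2 C' :=
  ⟨⟨x, hx, rfl⟩, ⟨x, hx, rfl⟩⟩

lemma desc2_pair (x y : Fin q × Fin q) :
    desc2 {x, y} = {z | (z.1 = x.1 ∨ z.1 = y.1) ∧ (z.2 = x.2 ∨ z.2 = y.2)} := by
  ext z
  simp [desc2, eq_comm]

lemma desc2_diagonals_eq (a a' b b' : Fin q) :
    desc2 {(a, b), (a', b')} = desc2 {(a, b'), (a', b)} := by
  simp only [desc2_pair, or_comm (b := _ = b)]

lemma subset_of_desc2_eq {C C₁ C₂ : Finset (Fin q × Fin q)} (hC : IsRectangleFree C)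
    (h₁ : C₁ ⊆ C) (h₂ : C₂ ⊆ C) (hcard : C₁.card ≤ 2) (hdesc : desc2 C₁ = desc2 C₂) :
    C₁ ⊆ C₂ := by
  rintro ⟨a₀, b₀⟩ hx
  by_contra hx₂
  obtain ⟨⟨⟨a, b'⟩, hc, rfl⟩, ⟨⟨a', b⟩, hd, rfl⟩⟩ := hdesc ▸ mem_desc2_of_mem hx
  have hb' : b' ≠ b := by rintro rfl; exact hx₂ hc
  have ha' : a' ≠ a := by rintro rfl; exact hx₂ hd
  obtain ⟨-, ⟨g, hg, hg₂⟩⟩ := hdesc ▸ mem_desc2_of_mem hc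
  obtain ⟨⟨e, he, he₁⟩, -⟩ := hdesc ▸ mem_desc2_of_mem hd
  obtain rfl : e = g := by
    by_contra hne
    have hex : e ≠ (a, b) := by rintro rfl; exact ha' he₁.symm
    have hgx : g ≠ (a, b) := by rintro rfl; exact hb' hg₂.symm
    have := Finset.two_lt_card.2 ⟨(a, b), hx, e, he, g, hg, hex.symm, hgx.symm, hne⟩
    omega
  have hcorner : (a', b') ∈ C := h₁ ((Prod.ext he₁ hg₂ : e = (a', b')) ▸ he)
  rcases hC (h₁ hx) (h₂ hc) (h₂ hd) hcorner with h | h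
  · exact ha' h.symm
  · exact hb' h.symm

lemma isRectangleFree_of_isSC2 {C : Finset (Fin q × Fin q)} (hC : isSC2 C) :
    IsRectangleFree C := by
  intro a a' b b' hab hab' ha'b ha'b'
  have hdiag := hC {(a, b), (a', b')} {(a, b'), (a', b)}
    (by simp [Finset.insert_subset_iff, *]) (by simp [Finset.insert_subset_iff, *])
    (by simp) (by simp) Finset.card_le_two Finset.card_le_two (desc2_diagonals_eq a a' b b')
  have hmem : (a, b) ∈ ({(a, b'), (a', b)} : Finset _) := hdiag ▸ by simp
  simp only [Finset.mem_insert, Finset.mem_singleton, Prod.mk.injEq] at hmem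
  tauto

lemma isSC2_of_isRectangleFree {C : Finset (Fin q × Fin q)} (hC : IsRectangleFree C) :
    isSC2 C := fun _ _ h₁ h₂ _ _ hcard₁ hcard₂ hdesc =>
  (subset_of_desc2_eq hC h₁ h₂ hcard₁ hdesc).antisymm
    (subset_of_desc2_eq hC h₂ h₁ hcard₂ hdesc.symm)

end

/-- A `(2,M,q)` code is `2̄`-separable iff `|A¹_{a₁} ∩ A¹_{a₂}| ≤ 1` for all distinct
`a₁, a₂`. -/
theorem sc2_iff_condI {q : ℕ} (C : Finset (Fin q × Fin q)) :
    isSC2 C ↔ CondI C := by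
  rw [condI_iff_isRectangleFree]
  exact ⟨isRectangleFree_of_isSC2, isSC2_of_isRectangleFree⟩
end

section
/- Let C be a 3-MIPPC(n,M,q) over Q. Then for any distinct a₁, a₂ ∈ Q, |A¹_{a₁} ∩ A¹_{a₂}| ≤ 1, where A¹_a = {b ∈ Q^{n−1} : (a,b) ∈ C} (b being the vector of the last n−1 coordinates). -/
/-!
If `(a₁, b), (a₂, b), (a₁, b'), (a₂, b')` are all codewords, the coalitions
`{(a₁, b), (a₂, b')}` and `{(a₂, b), (a₁, b')}` have the same descendants, since each offers
the same first symbols and, coordinatewise, the same tail symbols. A 3-MIPPC forces these two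
coalitions to share a codeword, which is only possible when `b = b'`.
-/

/-- Codewords of length `m+1` over `Fin q`, written as a first coordinate together with the
vector of the remaining `m` coordinates. Descendant code of a sub-code. -/
def descS {m q : ℕ} (C' : Finset (Fin q × (Fin m → Fin q))) :
    Set (Fin q × (Fin m → Fin q)) :=
  {x | (∃ c ∈ C', c.1 = x.1) ∧ ∀ i, ∃ c ∈ C', c.2 i = x.2 i}

/-- The multimedia `t`-IPP property for such codes. -/
def isMIPPCS {m q : ℕ} (t : ℕ) (C : Finset (Fin q × (Fin m → Fin q))) : Prop :=
  ∀ S : Set (Fin q × (Fin m → Fin q)),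
    (∃ C' : Finset (Fin q × (Fin m → Fin q)),
        C' ⊆ C ∧ C'.Nonempty ∧ C'.card ≤ t ∧ descS C' = S) →
    ∃ c, ∀ C' : Finset (Fin q × (Fin m → Fin q)),
      C' ⊆ C → C'.Nonempty → C'.card ≤ t → descS C' = S → c ∈ C'

/-- `A¹_a`: the set of vectors of last coordinates of codewords whose first coordinate is `a`. -/
def A1S {m q : ℕ} (C : Finset (Fin q × (Fin m → Fin q))) (a : Fin q) :
    Finset (Fin m → Fin q) :=
  (C.filter (fun c => c.1 = a)).image Prod.snd

variable {m q : ℕ}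

theorem mem_A1S {C : Finset (Fin q × (Fin m → Fin q))} {a : Fin q} {b : Fin m → Fin q} :
    b ∈ A1S C a ↔ (a, b) ∈ C := by
  simp [A1S]

theorem descS_pair_swap_fst (a₁ a₂ : Fin q) (b b' : Fin m → Fin q) :
    descS {(a₁, b), (a₂, b')} = descS {(a₂, b), (a₁, b')} := by
  ext x
  simp only [descS, Set.mem_ofPred_eq, Finset.mem_insert, Finset.mem_singleton,
    exists_eq_or_imp, exists_eq_left]
  constructor <;> rintro ⟨hfst, hsnd⟩ <;> exact ⟨hfst.symm, hsnd⟩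

theorem isMIPPCS.inter_nonempty_of_descS_eq {t : ℕ} {C C₁ C₂ : Finset (Fin q × (Fin m → Fin q))}
    (hC : isMIPPCS t C) (h₁C : C₁ ⊆ C) (h₂C : C₂ ⊆ C) (h₁ : C₁.Nonempty) (h₂ : C₂.Nonempty)
    (h₁t : C₁.card ≤ t) (h₂t : C₂.card ≤ t) (hdesc : descS C₁ = descS C₂) :
    (C₁ ∩ C₂).Nonempty := by
  obtain ⟨c, hc⟩ := hC (descS C₁) ⟨C₁, h₁C, h₁, h₁t, rfl⟩
  exact ⟨c, Finset.mem_inter.2 ⟨hc C₁ h₁C h₁ h₁t rfl, hc C₂ h₂C h₂ h₂t hdesc.symm⟩⟩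

theorem eq_of_pair_inter_swap_fst_nonempty {a₁ a₂ : Fin q} (hne : a₁ ≠ a₂)
    {b b' : Fin m → Fin q}
    (h : (({(a₁, b), (a₂, b')} : Finset _) ∩ {(a₂, b), (a₁, b')}).Nonempty) : b = b' := by
  obtain ⟨c, hc⟩ := h
  simp only [Finset.mem_inter, Finset.mem_insert, Finset.mem_singleton] at hc
  rcases hc with ⟨rfl | rfl, h | h⟩ <;> simp_all [Prod.ext_iff, eq_comm]

/-- In a 3-MIPPC, any two distinct `A¹`-sets meet in at most one vector. -/
theorem condI_of_mippc3 {m q : ℕ} (C : Finset (Fin q × (Fin m → Fin q)))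
    (hC : isMIPPCS 3 C) :
    ∀ a₁ a₂ : Fin q, a₁ ≠ a₂ → (A1S C a₁ ∩ A1S C a₂).card ≤ 1 := by
  intro a₁ a₂ hne
  refine Finset.card_le_one.2 fun b hb b' hb' => ?_
  simp only [Finset.mem_inter, mem_A1S] at hb hb'
  have hcard (x y : Fin q × (Fin m → Fin q)) : ({x, y} : Finset _).card ≤ 3 :=
    Finset.card_le_two.trans (by norm_num)
  have hsub₁ : {(a₁, b), (a₂, b')} ⊆ C := Finset.insert_subset hb.1 (by simpa using hb'.2)
  have hsub₂ : {(a₂, b), (a₁, b')} ⊆ C := Finset.insert_subset hb.2 (by simpa using hb'.1)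
  exact eq_of_pair_inter_swap_fst_nonempty hne <|
    hC.inter_nonempty_of_descS_eq hsub₁ hsub₂ (Finset.insert_nonempty _ _)
      (Finset.insert_nonempty _ _) (hcard _ _) (hcard _ _) (descS_pair_swap_fst a₁ a₂ b b')
end

section
/- Let C be a t-MIPPC(n,M,q) with n even, viewed via the bipartite graph G whose vertex classes are X = Y = Q^{n/2} and where an edge joins a ∈ X and b ∈ Y iff the concatenation (a,b) ∈ C. Then G contains no cycle of length 2t₀ for any 2 ≤ t₀ ≤ t; i.e., G has girth greater than 2t. -/
/-!
The edges of a `2t₀`-cycle `a₀ b₀ a₁ b₁ ⋯` split into two perfect matchings,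
`{(aᵢ, bᵢ)}` and `{(aᵢ₊₁, bᵢ)}`. Read as sub-codes of `C`, they have at most `t₀ ≤ t` codewords
each, and their descendant codes agree: on the first half of the coordinates both take exactly
the values of the `aᵢ`, on the second half those of the `bᵢ`. Since the vertices of the cycle are
distinct and `t₀ ≥ 2`, the two matchings share no edge, so no codeword lies in both,
contradicting the MIPPC property.
-/

open Finset

theorem isMIPPC.not_disjoint_of_descC_eq {n q t : ℕ} {C C₁ C₂ : Finset (Fin n → Fin q)}
    (hC : isMIPPC t C) (hsub₁ : C₁ ⊆ C) (hsub₂ : C₂ ⊆ C) (hne₁ : C₁.Nonempty)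
    (hne₂ : C₂.Nonempty) (hcard₁ : #C₁ ≤ t) (hcard₂ : #C₂ ≤ t) (hdesc : descC C₁ = descC C₂) :
    ¬ Disjoint C₁ C₂ := by
  obtain ⟨c, hc⟩ := hC _ ⟨C₁, hsub₁, hne₁, hcard₁, rfl⟩
  exact not_disjoint_iff.2 ⟨c, hc C₁ hsub₁ hne₁ hcard₁ rfl, hc C₂ hsub₂ hne₂ hcard₂ hdesc.symm⟩

theorem Fin.append_inj {α : Type*} {m k : ℕ} {x x' : Fin m → α} {y y' : Fin k → α} :
    Fin.append x y = Fin.append x' y' ↔ x = x' ∧ y = y' := by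
  refine ⟨fun h => ⟨funext fun i => ?_, funext fun i => ?_⟩, fun ⟨hx, hy⟩ => hx ▸ hy ▸ rfl⟩
  · simpa only [Fin.append_left] using congrFun h (Fin.castAdd k i)
  · simpa only [Fin.append_right] using congrFun h (Fin.natAdd m i)

theorem descC_image_append_subset {ι : Type*} {m k q : ℕ} {s s' : Finset ι}
    {x x' : ι → Fin m → Fin q} {y y' : ι → Fin k → Fin q}
    (hx : s.image x ⊆ s'.image x') (hy : s.image y ⊆ s'.image y') :
    descC (s.image fun i => Fin.append (x i) (y i)) ⊆
      descC (s'.image fun i => Fin.append (x' i) (y' i)) := by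
  intro z hz j
  obtain ⟨_, hc, hcz⟩ := hz j
  obtain ⟨i, hi, rfl⟩ := mem_image.1 hc
  rw [← hcz]
  induction j using Fin.addCases with
  | left j =>
    obtain ⟨i', hi', hxi⟩ := mem_image.1 (hx (mem_image_of_mem x hi))
    exact ⟨_, mem_image_of_mem _ hi', by simp only [Fin.append_left, hxi]⟩
  | right j =>
    obtain ⟨i', hi', hyi⟩ := mem_image.1 (hy (mem_image_of_mem y hi))
    exact ⟨_, mem_image_of_mem _ hi', by simp only [Fin.append_right, hyi]⟩

theorem Nat.exists_succ_mod_eq {n i : ℕ} (hi : i < n) : ∃ j < n, (j + 1) % n = i := by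
  cases i with
  | zero => exact ⟨n - 1, by omega, by rw [Nat.sub_add_cancel (by omega), Nat.mod_self]⟩
  | succ i => exact ⟨i, by omega, Nat.mod_eq_of_lt hi⟩

theorem Nat.succ_mod_ne_self {n i : ℕ} (hn : 2 ≤ n) (hi : i < n) : (i + 1) % n ≠ i := by
  rcases Nat.lt_or_ge (i + 1) n with h | h
  · rw [Nat.mod_eq_of_lt h]
    omega
  · rw [show i + 1 = n by omega, Nat.mod_self]
    omega

theorem Finset.image_range_succ_mod {α : Type*} [DecidableEq α] {n : ℕ} (hn : 0 < n)
    (f : ℕ → α) : (range n).image (fun i => f ((i + 1) % n)) = (range n).image f := by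
  ext z
  simp only [mem_image, mem_range]
  constructor
  · rintro ⟨i, -, rfl⟩
    exact ⟨_, Nat.mod_lt _ hn, rfl⟩
  · rintro ⟨i, hi, rfl⟩
    obtain ⟨j, hj, rfl⟩ := Nat.exists_succ_mod_eq hi
    exact ⟨j, hj, rfl⟩

theorem disjoint_cycle_matchings {α : Type*} [DecidableEq α] {m k t₀ : ℕ} (ht₀ : 2 ≤ t₀)
    {a : ℕ → Fin m → α} {b : ℕ → Fin k → α} (ha : Set.InjOn a (Set.Iio t₀))
    (hb : Set.InjOn b (Set.Iio t₀)) :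
    Disjoint ((range t₀).image fun i => Fin.append (a i) (b i))
      ((range t₀).image fun i => Fin.append (a ((i + 1) % t₀)) (b i)) := by
  simp only [disjoint_left, mem_image, mem_range, not_exists, not_and]
  rintro _ ⟨i, hi, rfl⟩ j hj hij
  obtain ⟨haij, hbij⟩ := Fin.append_inj.1 hij
  obtain rfl := hb hj hi hbij
  exact Nat.succ_mod_ne_self ht₀ hj (ha (Nat.mod_lt _ (by omega)) hj haij)

/-- For a `t`-MIPPC of even length `m + m`, the associated bipartite graph on
`X = Y = Q^m`, with an edge between `a` and `b` iff the concatenation `(a,b)` is a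
codeword, contains no cycle of length `2t₀` for any `2 ≤ t₀ ≤ t`. -/
theorem mippc_no_short_cycles {t m q : ℕ} (C : Finset (Fin (m + m) → Fin q))
    (hC : isMIPPC t C) :
    ¬ ∃ t₀ : ℕ, 2 ≤ t₀ ∧ t₀ ≤ t ∧
      ∃ a b : ℕ → (Fin m → Fin q),
        (∀ i j, i < t₀ → j < t₀ → a i = a j → i = j) ∧
        (∀ i j, i < t₀ → j < t₀ → b i = b j → i = j) ∧
        (∀ i, i < t₀ → Fin.append (a i) (b i) ∈ C) ∧
        (∀ i, i < t₀ → Fin.append (a ((i + 1) % t₀)) (b i) ∈ C) := by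
  rintro ⟨t₀, ht₀, ht₀t, a, b, ha, hb, hedge, hedge'⟩
  have hpos : 0 < t₀ := by omega
  have hrot : (range t₀).image (fun i => a ((i + 1) % t₀)) = (range t₀).image a :=
    image_range_succ_mod hpos a
  have hcard (f : ℕ → Fin (m + m) → Fin q) : #((range t₀).image f) ≤ t :=
    card_image_le.trans ((card_range t₀).trans_le ht₀t)
  have hne (f : ℕ → Fin (m + m) → Fin q) : ((range t₀).image f).Nonempty :=
    (nonempty_range_iff.2 hpos.ne').image f
  refine hC.not_disjoint_of_descC_eq
    (image_subset_iff.2 fun i hi => hedge i (mem_range.1 hi))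
    (image_subset_iff.2 fun i hi => hedge' i (mem_range.1 hi))
    (hne _) (hne _) (hcard _) (hcard _)
    ((descC_image_append_subset hrot.ge subset_rfl).antisymm
      (descC_image_append_subset hrot.le subset_rfl))
    (disjoint_cycle_matchings ht₀ (fun i hi j hj => ha i j hi hj)
      (fun i hi j hj => hb i j hi hj))
end
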